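/- arXiv:2407.07669 — 2 statements merged into one kernel-verified Lean document; each statement's English description precedes it below -/
import Mathlib

section
/- Let n be a natural number, and let U : Fin n → ℕ (utilities), p : Fin n → ℕ (CPU requirements), C : Fin n → ℕ (offloading costs) and P : ℕ (OEN CPU capacity) be given, with C i ≥ U i for every i. Consider all triples of functions F, T, d : Fin n → Bool such that for every demand i exactly one of F i (reject), T i (offload) and d i (place on the OEN) is true, and such that the total CPU requirement of placed demands satisfies ∑_{i : d i = true} p i ≤ P. Then the maximum over all such feasible triples of the integer-valued profit ∑_i ( (if F i then 0 else U i) − (if T i then C i else 0) ) equals the 0-1 knapsack optimum KPopt(U, p, P) = max { ∑_{i ∈ S} U i : S ⊆ Fin n, ∑_{i ∈ S} p i ≤ P }. In particular, the demand-placement subproblem on a single operator edge node with limiting CPU resources contains the 0-1 knapsack problem as the special case where offloading is never profitable. -/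
/-- The 0-1 knapsack optimum: the maximum of `∑ i ∈ S, v i` over all subsets
`S ⊆ Fin n` with `∑ i ∈ S, w i ≤ W`. -/
def KPopt (n : ℕ) (v w : Fin n → ℕ) (W : ℕ) : ℕ :=
  (Finset.univ.powerset.filter (fun S : Finset (Fin n) => ∑ i ∈ S, w i ≤ W)).sup
    (fun S : Finset (Fin n) => ∑ i ∈ S, v i)

/-- The maximum profit of the single-OEN demand-placement subproblem
(reject / offload / place, with a CPU capacity on placed demands) equals the
0-1 knapsack optimum, whenever offloading is never profitable (`U i ≤ C i`). -/
theorem demand_placement_eq_knapsack (n : ℕ) (U p C : Fin n → ℕ) (P : ℕ)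
    (hC : ∀ i, U i ≤ C i) :
    IsGreatest
      {z : ℤ | ∃ F T d : Fin n → Bool,
        (∀ i, (F i).toNat + (T i).toNat + (d i).toNat = 1) ∧
        (∑ i ∈ Finset.univ.filter (fun i => d i = true), p i) ≤ P ∧
        z = ∑ i, ((if F i then 0 else (U i : ℤ)) - (if T i then (C i : ℤ) else 0))}
      ((KPopt n U p P : ℤ)) := by
  constructor
  · -- membership: find optimal S
    have hne : (Finset.univ.powerset.filter
        (fun S : Finset (Fin n) => ∑ i ∈ S, p i ≤ P)).Nonempty := by
      refine ⟨∅, ?_⟩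
      simp
    obtain ⟨S, hS, hSeq⟩ := Finset.exists_mem_eq_sup _ hne
      (fun S : Finset (Fin n) => ∑ i ∈ S, U i)
    simp only [Finset.mem_filter, Finset.mem_powerset] at hS
    refine ⟨fun i => decide (i ∉ S), fun _ => false, fun i => decide (i ∈ S), ?_, ?_, ?_⟩
    · intro i
      by_cases h : i ∈ S <;> simp [h]
    · have : (Finset.univ.filter (fun i => decide (i ∈ S) = true)) = S := by
        ext i; simp
      rw [this]; exact hS.2
    · rw [KPopt, hSeq]
      push_cast
      have h2 : ∀ i, ((if decide (i ∉ S) = true then 0 else (U i : ℤ)) - 0) =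
          (if i ∈ S then (U i : ℤ) else 0) := by
        intro i; by_cases h : i ∈ S <;> simp [h]
      simp only [h2]
      rw [Finset.sum_ite_mem, Finset.univ_inter]
  · -- upper bound
    rintro z ⟨F, T, d, hone, hcap, rfl⟩
    have hterm : ∀ i, ((if F i then 0 else (U i : ℤ)) - (if T i then (C i : ℤ) else 0))
        ≤ (if d i then (U i : ℤ) else 0) := by
      intro i
      have := hone i
      cases hF : F i <;> cases hT : T i <;> cases hd : d i <;>
        simp [hF, hT, hd] at this ⊢
      · exact_mod_cast hC i
    calc (∑ i, ((if F i then 0 else (U i : ℤ)) - (if T i then (C i : ℤ) else 0)))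
        ≤ ∑ i, (if d i then (U i : ℤ) else 0) := Finset.sum_le_sum fun i _ => hterm i
      _ = ((∑ i ∈ Finset.univ.filter (fun i => d i = true), U i : ℕ) : ℤ) := by
          push_cast
          rw [Finset.sum_filter]
      _ ≤ (KPopt n U p P : ℤ) := by
          have : (∑ i ∈ Finset.univ.filter (fun i => d i = true), U i) ≤ KPopt n U p P := by
            rw [KPopt]
            exact Finset.le_sup (f := fun S => ∑ i ∈ S, U i)
              (by simp only [Finset.mem_filter, Finset.mem_powerset]
                  exact ⟨Finset.subset_univ _, hcap⟩)
          exact_mod_cast this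
end

section
/- Let n be a natural number, and let U : Fin n → ℕ (utilities), p : Fin n → ℕ (CPU requirements), C : Fin n → ℕ (offloading costs), P : ℕ (OEN CPU capacity) and C_e : ℕ (the cost of switching on the OEN) be given, with C i ≥ U i for every i. Consider all choices of a Boolean z (whether the OEN is switched on) and functions F, T, d : Fin n → Bool such that: for every i exactly one of F i, T i, d i is true; if z is false then d i is false for every i; and ∑_{i : d i = true} p i ≤ P. Then the maximum over all such feasible choices of the integer-valued profit ∑_i ( (if F i then 0 else U i) − (if T i then C i else 0) ) − (if z then C_e else 0) equals max(0, KPopt(U, p, P) − C_e), where KPopt(U, p, P) = max { ∑_{i ∈ S} U i : S ⊆ Fin n, ∑_{i ∈ S} p i ≤ P } is the 0-1 knapsack optimum. -/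
lemma kp_le (n : ℕ) (v w : Fin n → ℕ) (W : ℕ) (S : Finset (Fin n))
    (hS : ∑ i ∈ S, w i ≤ W) : ∑ i ∈ S, v i ≤ KPopt n v w W := by
  unfold KPopt
  exact Finset.le_sup (f := fun S : Finset (Fin n) => ∑ i ∈ S, v i)
    (by simp [Finset.mem_filter, hS])

lemma kp_exists (n : ℕ) (v w : Fin n → ℕ) (W : ℕ) :
    ∃ S : Finset (Fin n), ∑ i ∈ S, w i ≤ W ∧ KPopt n v w W = ∑ i ∈ S, v i := by
  have hne : (Finset.univ.powerset.filter
      (fun S : Finset (Fin n) => ∑ i ∈ S, w i ≤ W)).Nonempty :=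
    ⟨∅, by simp⟩
  obtain ⟨S, hS, hsup⟩ := Finset.exists_mem_eq_sup _ hne
    (fun S : Finset (Fin n) => ∑ i ∈ S, v i)
  simp only [Finset.mem_filter] at hS
  exact ⟨S, hS.2, hsup⟩

/-- The maximum profit of the single-OEN restriction of the paper's objective,
including the switching-on cost `Ce` of the OEN, equals
`max 0 (KPopt U p P - Ce)`, whenever offloading is never profitable. -/
theorem single_OEN_profit_eq_knapsack (n : ℕ) (U p C : Fin n → ℕ) (P Ce : ℕ)
    (hC : ∀ i, U i ≤ C i) :
    IsGreatest
      {profit : ℤ | ∃ (z : Bool) (F T d : Fin n → Bool),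
        (∀ i, (F i).toNat + (T i).toNat + (d i).toNat = 1) ∧
        (z = false → ∀ i, d i = false) ∧
        (∑ i ∈ Finset.univ.filter (fun i => d i = true), p i) ≤ P ∧
        profit = (∑ i, ((if F i then 0 else (U i : ℤ)) - (if T i then (C i : ℤ) else 0)))
          - (if z then (Ce : ℤ) else 0)}
      (max 0 ((KPopt n U p P : ℤ) - (Ce : ℤ))) := by
  constructor
  · -- membership
    rcases le_or_gt ((KPopt n U p P : ℤ) - Ce) 0 with h | h
    · rw [max_eq_left h]
      refine ⟨false, fun _ => true, fun _ => false, fun _ => false, ?_, ?_, ?_, ?_⟩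
      · intro i; simp
      · intro _ i; rfl
      · simp
      · simp
    · rw [max_eq_right h.le]
      obtain ⟨S, hSw, hSv⟩ := kp_exists n U p P
      refine ⟨true, fun i => decide (i ∉ S), fun _ => false, fun i => decide (i ∈ S),
        ?_, ?_, ?_, ?_⟩
      · intro i; by_cases hi : i ∈ S <;> simp [hi]
      · simp
      · have : (Finset.univ.filter (fun i => decide (i ∈ S) = true)) = S := by
          ext i; simp
        rw [this]; exact hSw
      · have : ∀ i, ((if decide (i ∉ S) then 0 else (U i : ℤ))
            - (if (false : Bool) then (C i : ℤ) else 0))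
            = if i ∈ S then (U i : ℤ) else 0 := by
          intro i; by_cases hi : i ∈ S <;> simp [hi]
        rw [Finset.sum_congr rfl (fun i _ => this i), Finset.sum_ite_mem,
          Finset.univ_inter, hSv]
        simp
  · -- upper bound
    rintro x ⟨z, F, T, d, hone, hz, hw, rfl⟩
    have hterm : ∀ i, ((if F i then 0 else (U i : ℤ)) - (if T i then (C i : ℤ) else 0))
        ≤ if d i then (U i : ℤ) else 0 := by
      intro i
      have h := hone i
      have hCi := hC i
      rcases hF : F i <;> rcases hT : T i <;> rcases hd : d i <;>
        simp [hF, hT, hd] at h ⊢ <;> omega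
    have hsum : (∑ i, ((if F i then 0 else (U i : ℤ)) - (if T i then (C i : ℤ) else 0)))
        ≤ ∑ i ∈ Finset.univ.filter (fun i => d i = true), (U i : ℤ) := by
      calc _ ≤ ∑ i, if d i then (U i : ℤ) else 0 := Finset.sum_le_sum fun i _ => hterm i
        _ = _ := by rw [Finset.sum_filter]
    have hkp : (∑ i ∈ Finset.univ.filter (fun i => d i = true), (U i : ℤ))
        ≤ (KPopt n U p P : ℤ) := by
      have := kp_le n U p P (Finset.univ.filter (fun i => d i = true)) hw
      exact_mod_cast (by push_cast; exact_mod_cast this : _)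
    cases z with
    | false =>
      have hd0 : ∀ i, d i = false := hz rfl
      have : (∑ i ∈ Finset.univ.filter (fun i => d i = true), (U i : ℤ)) = 0 := by
        have : Finset.univ.filter (fun i : Fin n => d i = true) = ∅ := by
          ext i; simp [hd0 i]
        rw [this]; simp
      simp only [if_neg (by simp : ¬ (false : Bool) = true), sub_zero]
      exact le_max_of_le_left (by linarith)
    | true =>
      refine le_max_of_le_right ?_
      rw [if_pos rfl]
      linarith
end
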